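/- Let 1 < β ≤ 2, let M ≥ 2 be an integer, let K > 0, h > 0, σ ∈ (0,1], and let c > 0 (in the paper, c = ĉ_0^{(n)} > 0). Then the (M−1)×(M−1) real matrix A with entries A_{ij} = c·δ_{ij} + σ K h^{−β} g_{i−j}^{(β)} for 1 ≤ i, j ≤ M−1 (δ being the Kronecker delta) is symmetric and positive definite. -/

import Mathlib

open Real Finset Matrix

/-- The fractional centred difference coefficients
`g_k^{(β)} = (−1)^k Γ(β+1) / (Γ(β/2 − k + 1) Γ(β/2 + k + 1))`. -/
noncomputable def g (β : ℝ) (k : ℤ) : ℝ :=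
  (-1 : ℝ) ^ k * Real.Gamma (β + 1) /
    (Real.Gamma (β / 2 - k + 1) * Real.Gamma (β / 2 + k + 1))

/-- The coefficient matrix `A = c I + σ K h^{−β} G` of the one-dimensional scheme,
with entries `A_{ij} = c δ_{ij} + σ K h^{−β} g_{i−j}^{(β)}`. -/
noncomputable def Amat (β : ℝ) (M : ℕ) (K h σ c : ℝ) :
    Matrix (Fin (M - 1)) (Fin (M - 1)) ℝ :=
  Matrix.of fun i j =>
    (if i = j then c else 0) + σ * K * h ^ (-β) * g β ((i : ℤ) - (j : ℤ))

noncomputable def hfun (β : ℝ) (k : ℤ) : ℝ :=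
  (-1 : ℝ) ^ k * Real.Gamma β / (Real.Gamma (β / 2 - k + 1) * Real.Gamma (β / 2 + k))

/-- sign of Gamma at `x - n` for `x ∈ (0,1)` -/
lemma gammaSign {x : ℝ} (h0 : 0 < x) (h1 : x < 1) (n : ℕ) :
    0 < (-1 : ℝ) ^ n * Real.Gamma (x - n) := by
  induction n with
  | zero => simpa using Real.Gamma_pos_of_pos h0
  | succ n ih =>
    have hne : x - ((n : ℝ) + 1) ≠ 0 := by nlinarith
    have hrec : Real.Gamma (x - n) = (x - ((n:ℝ)+1)) * Real.Gamma (x - ((n:ℝ)+1)) := by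
      rw [← Real.Gamma_add_one hne]; ring_nf
    have hneg : x - ((n:ℝ) + 1) < 0 := by nlinarith
    rw [hrec] at ih
    have h3 : 0 < (x - ((n:ℝ)+1)) * ((-1:ℝ)^n * Real.Gamma (x - ((n:ℝ)+1))) := by
      rw [show (x - ((n:ℝ)+1)) * ((-1:ℝ)^n * Real.Gamma (x - ((n:ℝ)+1)))
          = (-1:ℝ)^n * ((x - ((n:ℝ)+1)) * Real.Gamma (x - ((n:ℝ)+1))) from by ring]
      exact ih
    rcases mul_pos_iff.mp h3 with ⟨h4, _⟩ | ⟨_, h5⟩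
    · linarith
    · have he : (-1:ℝ)^(n+1) * Real.Gamma (x - ((n:ℝ)+1))
          = -((-1:ℝ)^n * Real.Gamma (x - ((n:ℝ)+1))) := by ring
      push_cast
      rw [he]; linarith

lemma neg_one_pow_eq (n : ℕ) : (-1 : ℝ) ^ n = 1 ∨ (-1 : ℝ) ^ n = -1 := by
  rcases Nat.even_or_odd n with h | h
  · left; exact h.neg_one_pow
  · right; exact h.neg_one_pow

lemma neg_one_zpow_eq (k : ℤ) : (-1 : ℝ) ^ k = 1 ∨ (-1 : ℝ) ^ k = -1 := by
  rcases Int.even_or_odd k with h | h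
  · left; exact h.neg_one_zpow
  · right; exact h.neg_one_zpow

lemma gamma_two' : Real.Gamma 2 = 1 := by
  rw [(by norm_num : (2:ℝ) = (1:ℕ) + 1), Real.Gamma_nat_eq_factorial]; norm_num

lemma gamma_three' : Real.Gamma 3 = 2 := by
  rw [(by norm_num : (3:ℝ) = (2:ℕ) + 1), Real.Gamma_nat_eq_factorial]; norm_num

lemma hfun_two (k : ℤ) : hfun 2 k = if k = 0 then 1 else if k = 1 then -1 else 0 := by
  rcases (by omega : k ≤ -1 ∨ k = 0 ∨ k = 1 ∨ 2 ≤ k) with hk | rfl | rfl | hk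
  · obtain ⟨n, rfl⟩ : ∃ n : ℕ, k = -(n + 1) := ⟨(-k - 1).toNat, by omega⟩
    rw [hfun, show (2:ℝ)/2 + ((-(n+1:ℤ) : ℤ) : ℝ) = -(n : ℝ) from by push_cast; ring,
      Real.Gamma_neg_nat_eq_zero, mul_zero, div_zero, if_neg (by omega), if_neg (by omega)]
  · norm_num [hfun, gamma_two', Real.Gamma_one]
  · norm_num [hfun, gamma_two', Real.Gamma_one]
  · obtain ⟨n, rfl⟩ : ∃ n : ℕ, k = n + 2 := ⟨(k - 2).toNat, by omega⟩
    rw [hfun, show (2:ℝ)/2 - (((n:ℤ) + 2 : ℤ) : ℝ) + 1 = -(n : ℝ) from by push_cast; ring,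
      Real.Gamma_neg_nat_eq_zero, zero_mul, div_zero, if_neg (by omega), if_neg (by omega)]

lemma g_two (k : ℤ) : g 2 k = if k = 0 then 2 else if k = 1 ∨ k = -1 then -1 else 0 := by
  rcases (by omega : k ≤ -2 ∨ k = -1 ∨ k = 0 ∨ k = 1 ∨ 2 ≤ k) with hk | rfl | rfl | rfl | hk
  · obtain ⟨n, rfl⟩ : ∃ n : ℕ, k = -(n + 2) := ⟨(-k - 2).toNat, by omega⟩
    rw [g, show (2:ℝ)/2 + ((-(n+2:ℤ) : ℤ) : ℝ) + 1 = -(n : ℝ) from by push_cast; ring,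
      Real.Gamma_neg_nat_eq_zero, mul_zero, div_zero, if_neg (by omega),
      if_neg (by rintro (h | h) <;> omega)]
  · norm_num [g, gamma_three', Real.Gamma_one]
  · norm_num [g, gamma_three', gamma_two', Real.Gamma_one]
  · norm_num [g, gamma_three', gamma_two', Real.Gamma_one]
  · obtain ⟨n, rfl⟩ : ∃ n : ℕ, k = n + 2 := ⟨(k - 2).toNat, by omega⟩
    rw [g, show (2:ℝ)/2 - (((n:ℤ) + 2 : ℤ) : ℝ) + 1 = -(n : ℝ) from by push_cast; ring,
      Real.Gamma_neg_nat_eq_zero, zero_mul, div_zero, if_neg (by omega),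
      if_neg (by rintro (h | h) <;> omega)]

lemma g_eq_h {β : ℝ} (hβ1 : 1 < β) (hβ2 : β ≤ 2) (k : ℤ) :
    g β k = hfun β k - hfun β (k + 1) := by
  rcases eq_or_lt_of_le hβ2 with rfl | hβ2'
  · rw [g_two, hfun_two, hfun_two]
    split_ifs <;> first | omega | norm_num
  · have hx0 : (0:ℝ) < β / 2 := by linarith
    have hx1 : β / 2 < 1 := by linarith
    have hni : ∀ z : ℤ, β / 2 ≠ (z : ℝ) := by
      intro z hz
      have h1 : (0:ℝ) < (z:ℝ) := hz ▸ hx0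
      have h2 : (z:ℝ) < 1 := hz ▸ hx1
      have : (0:ℤ) < z := by exact_mod_cast h1
      have : z < 1 := by exact_mod_cast h2
      omega
    have hGne : ∀ z : ℤ, Real.Gamma (β / 2 + (z : ℝ)) ≠ 0 := by
      intro z
      apply Real.Gamma_ne_zero
      intro m hm
      exact hni (-(m:ℤ) - z) (by push_cast; linarith)
    have hne1 : β / 2 - (k:ℝ) ≠ 0 := by
      intro h; exact hni k (by linarith)
    have hne2 : β / 2 + (k:ℝ) ≠ 0 := by
      intro h; exact hni (-k) (by push_cast; linarith)
    have r1 : Real.Gamma (β / 2 - (k:ℝ) + 1) = (β / 2 - k) * Real.Gamma (β / 2 - k) :=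
      Real.Gamma_add_one hne1
    have r2 : Real.Gamma (β / 2 + (k:ℝ) + 1) = (β / 2 + k) * Real.Gamma (β / 2 + k) :=
      Real.Gamma_add_one hne2
    have rB : Real.Gamma (β + 1) = β * Real.Gamma β := Real.Gamma_add_one (by linarith)
    have hA : Real.Gamma (β / 2 - (k:ℝ)) ≠ 0 := by
      have := hGne (-k); rwa [show β / 2 + ((-k : ℤ):ℝ) = β / 2 - (k:ℝ) from by push_cast; ring]
        at this
    have hB : Real.Gamma (β / 2 + (k:ℝ)) ≠ 0 := hGne k
    rw [g, hfun, hfun, show ((k + 1 : ℤ) : ℝ) = (k : ℝ) + 1 from by push_cast; ring,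
      show β / 2 - ((k:ℝ) + 1) + 1 = β / 2 - k from by ring,
      show β / 2 + ((k:ℝ) + 1) = β / 2 + k + 1 from by ring,
      zpow_add_one₀ (by norm_num : (-1:ℝ) ≠ 0), r1, r2, rB]
    set A := Real.Gamma (β / 2 - (k:ℝ)) with hA'
    set B := Real.Gamma (β / 2 + (k:ℝ)) with hB'
    rw [div_sub_div _ _ (mul_ne_zero (mul_ne_zero hne1 hA) hB)
        (mul_ne_zero hA (mul_ne_zero hne2 hB)),
      div_eq_div_iff (mul_ne_zero (mul_ne_zero hne1 hA) (mul_ne_zero hne2 hB))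
        (mul_ne_zero (mul_ne_zero (mul_ne_zero hne1 hA) hB)
          (mul_ne_zero hA (mul_ne_zero hne2 hB)))]
    ring

/-- aux: `e*y/(P*D) = y/(P*(e*D))` for `e = ±1` -/
lemma auxsign1 (e y P D : ℝ) (he : e = 1 ∨ e = -1) :
    e * y / (P * D) = y / (P * (e * D)) := by
  rcases he with rfl | rfl
  · rw [one_mul, one_mul]
  · rw [neg_one_mul, neg_one_mul, neg_div, mul_neg, div_neg]

lemma auxsign2 (e y P D : ℝ) (he : e = 1 ∨ e = -1) :
    e * y / (D * P) = y / ((e * D) * P) := by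
  rcases he with rfl | rfl
  · rw [one_mul, one_mul]
  · rw [neg_one_mul, neg_one_mul, neg_div, neg_mul, div_neg]

lemma g_symm (β : ℝ) (k : ℤ) : g β (-k) = g β k := by
  rw [g, g, _root_.zpow_neg]
  rcases neg_one_zpow_eq k with h | h <;>
    rw [h] <;> push_cast <;> norm_num <;>
    rw [mul_comm, show β / 2 + -(k:ℝ) + 1 = β / 2 - (k:ℝ) + 1 from by ring]

lemma hfun_nonneg {β : ℝ} (hβ1 : 1 < β) (hβ2 : β ≤ 2) {k : ℤ} (hk : k ≤ 0) :
    0 ≤ hfun β k := by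
  rcases eq_or_lt_of_le hβ2 with rfl | hβ2'
  · rw [hfun_two]; split_ifs <;> first | omega | norm_num
  · obtain ⟨n, rfl⟩ : ∃ n : ℕ, k = -(n : ℤ) := ⟨(-k).toNat, by omega⟩
    have hx0 : (0:ℝ) < β / 2 := by linarith
    have hx1 : β / 2 < 1 := by linarith
    rw [hfun, show ((-(n:ℤ) : ℤ) : ℝ) = -(n:ℝ) from by push_cast; ring,
      show β / 2 - -(n:ℝ) + 1 = β / 2 + n + 1 from by ring,
      show β / 2 + -(n:ℝ) = β / 2 - n from by ring,
      _root_.zpow_neg, zpow_natCast]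
    have hinv : ((-1:ℝ) ^ n)⁻¹ = (-1:ℝ) ^ n := by
      rcases neg_one_pow_eq n with h | h <;> rw [h] <;> norm_num
    rw [hinv, auxsign1 _ _ _ _ (neg_one_pow_eq n)]
    have hP : 0 < Real.Gamma (β / 2 + n + 1) :=
      Real.Gamma_pos_of_pos (by positivity)
    exact div_nonneg (Real.Gamma_nonneg_of_nonneg (by linarith))
      (mul_nonneg hP.le (gammaSign hx0 hx1 n).le)

lemma hfun_nonpos {β : ℝ} (hβ1 : 1 < β) (hβ2 : β ≤ 2) {k : ℤ} (hk : 1 ≤ k) :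
    hfun β k ≤ 0 := by
  rcases eq_or_lt_of_le hβ2 with rfl | hβ2'
  · rw [hfun_two]; split_ifs <;> first | omega | norm_num
  · obtain ⟨n, rfl⟩ : ∃ n : ℕ, k = (n : ℤ) + 1 := ⟨(k - 1).toNat, by omega⟩
    have hx0 : (0:ℝ) < β / 2 := by linarith
    have hx1 : β / 2 < 1 := by linarith
    rw [hfun, show (((n:ℤ) + 1 : ℤ) : ℝ) = (n:ℝ) + 1 from by push_cast; ring,
      show β / 2 - ((n:ℝ) + 1) + 1 = β / 2 - n from by ring,
      show β / 2 + ((n:ℝ) + 1) = β / 2 + n + 1 from by ring,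
      show ((n:ℤ) + 1) = ((n + 1 : ℕ) : ℤ) from by push_cast; ring,
      zpow_natCast, pow_succ]
    rw [show (-1:ℝ) ^ n * -1 * Real.Gamma β = -((-1:ℝ) ^ n * Real.Gamma β) from by ring,
      neg_div, auxsign2 _ _ _ _ (neg_one_pow_eq n)]
    have hP : 0 < Real.Gamma (β / 2 + n + 1) :=
      Real.Gamma_pos_of_pos (by positivity)
    simp only [neg_nonpos]
    exact div_nonneg (Real.Gamma_nonneg_of_nonneg (by linarith))
      (mul_nonneg (gammaSign hx0 hx1 n).le hP.le)

lemma g_nonpos_pos {β : ℝ} (hβ1 : 1 < β) (hβ2 : β ≤ 2) (n : ℕ) :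
    g β ((n : ℤ) + 1) ≤ 0 := by
  rcases eq_or_lt_of_le hβ2 with rfl | hβ2'
  · rw [g_two]; split_ifs <;> first | omega | norm_num
  · have hx0 : (0:ℝ) < β / 2 := by linarith
    have hx1 : β / 2 < 1 := by linarith
    rw [g, show (((n:ℤ) + 1 : ℤ) : ℝ) = (n:ℝ) + 1 from by push_cast; ring,
      show β / 2 - ((n:ℝ) + 1) + 1 = β / 2 - n from by ring,
      show β / 2 + ((n:ℝ) + 1) + 1 = β / 2 + n + 2 from by ring,
      show ((n:ℤ) + 1) = ((n + 1 : ℕ) : ℤ) from by push_cast; ring,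
      zpow_natCast, pow_succ]
    rw [show (-1:ℝ) ^ n * -1 * Real.Gamma (β + 1)
        = -((-1:ℝ) ^ n * Real.Gamma (β + 1)) from by ring,
      neg_div, auxsign2 _ _ _ _ (neg_one_pow_eq n)]
    have hP : 0 < Real.Gamma (β / 2 + n + 2) :=
      Real.Gamma_pos_of_pos (by positivity)
    simp only [neg_nonpos]
    exact div_nonneg (Real.Gamma_nonneg_of_nonneg (by linarith))
      (mul_nonneg (gammaSign hx0 hx1 n).le hP.le)

lemma g_nonpos {β : ℝ} (hβ1 : 1 < β) (hβ2 : β ≤ 2) {k : ℤ} (hk : k ≠ 0) :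
    g β k ≤ 0 := by
  rcases (by omega : 1 ≤ k ∨ 1 ≤ -k) with hk1 | hk1
  · obtain ⟨n, rfl⟩ : ∃ n : ℕ, k = (n : ℤ) + 1 := ⟨(k - 1).toNat, by omega⟩
    exact g_nonpos_pos hβ1 hβ2 n
  · obtain ⟨n, hn⟩ : ∃ n : ℕ, -k = (n : ℤ) + 1 := ⟨(-k - 1).toNat, by omega⟩
    have : k = -((n : ℤ) + 1) := by omega
    rw [this, g_symm]
    exact g_nonpos_pos hβ1 hβ2 n

lemma sum_g {β : ℝ} (hβ1 : 1 < β) (hβ2 : β ≤ 2) (a : ℤ) (N : ℕ) :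
    ∑ t ∈ Finset.range N, g β (a - t) = hfun β (a - N + 1) - hfun β (a + 1) := by
  induction N with
  | zero => simp
  | succ N ih =>
    rw [Finset.sum_range_succ, ih, g_eq_h hβ1 hβ2 (a - N),
      show ((N + 1 : ℕ) : ℤ) = (N : ℤ) + 1 from by push_cast; ring,
      show a - ((N:ℤ) + 1) + 1 = a - N from by ring]
    ring

/-- Lemma 2.9: the coefficient matrix `A = c I + σ K h^{−β} G` is symmetric and
positive definite. -/
theorem Amat_isSymm_posDef (β : ℝ) (hβ1 : 1 < β) (hβ2 : β ≤ 2) (M : ℕ) (hM : 2 ≤ M)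
    (K h σ c : ℝ) (hK : 0 < K) (hh : 0 < h) (hσ1 : 0 < σ) (hσ2 : σ ≤ 1) (hc : 0 < c) :
    (Amat β M K h σ c).IsSymm ∧ (Amat β M K h σ c).PosDef := by
  have hb : 0 < σ * K * h ^ (-β) := by
    have := Real.rpow_pos_of_pos hh (-β)
    positivity
  set b := σ * K * h ^ (-β) with hbdef
  -- symmetry
  have hgsymm : ∀ i j : Fin (M-1), g β ((i:ℤ) - (j:ℤ)) = g β ((j:ℤ) - (i:ℤ)) := by
    intro i j
    rw [show ((j:ℤ) - (i:ℤ)) = -((i:ℤ) - (j:ℤ)) from by ring, g_symm]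
  have hsymm : (Amat β M K h σ c).IsSymm := by
    rw [Matrix.IsSymm]
    ext i j
    simp only [Matrix.transpose_apply, Amat, Matrix.of_apply]
    rw [hgsymm j i]
    congr 1
    simp [eq_comm]
  refine ⟨hsymm, Matrix.posDef_iff_dotProduct_mulVec.mpr ⟨?_, ?_⟩⟩
  · -- Hermitian
    ext i j
    rw [Matrix.conjTranspose_apply, star_trivial]
    exact congrFun (congrFun hsymm i) j
  · intro x hx
    -- row sums nonneg
    have rowsum : ∀ i : Fin (M-1), 0 ≤ ∑ j : Fin (M-1), g β ((i:ℤ) - (j:ℤ)) := by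
      intro i
      have conv : ∑ j : Fin (M-1), g β ((i:ℤ) - (j:ℤ))
          = ∑ t ∈ Finset.range (M-1), g β ((i:ℤ) - (t:ℤ)) :=
        Fin.sum_univ_eq_sum_range (fun t => g β ((i:ℤ) - (t:ℤ))) (M-1)
      rw [conv, sum_g hβ1 hβ2]
      have hi := i.isLt
      have h1 : 0 ≤ hfun β ((i:ℤ) - ((M-1 : ℕ):ℤ) + 1) :=
        hfun_nonneg hβ1 hβ2 (by omega)
      have h2 : hfun β ((i:ℤ) + 1) ≤ 0 :=
        hfun_nonpos hβ1 hβ2 (by omega)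
      linarith
    -- expansion of the quadratic form
    have expand : dotProduct x ((Amat β M K h σ c).mulVec x)
        = c * ∑ i, x i ^ 2 + b * ∑ i : Fin (M-1), ∑ j : Fin (M-1), g β ((i:ℤ) - (j:ℤ)) * (x i * x j) := by
      simp only [dotProduct, Matrix.mulVec, Amat, Matrix.of_apply,
        add_mul, ite_mul, zero_mul, Finset.sum_add_distrib, Finset.sum_ite_eq,
        Finset.mem_univ, if_true, mul_add, Finset.mul_sum, Finset.sum_add_distrib]
      congr 1
      · exact Finset.sum_congr rfl fun i _ => by ring
      · exact Finset.sum_congr rfl fun i _ => Finset.sum_congr rfl fun j _ => by ring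
    -- nonnegativity of the g-part
    have hQ : 0 ≤ ∑ i : Fin (M-1), ∑ j : Fin (M-1), g β ((i:ℤ) - (j:ℤ)) * (x i * x j) := by
      have e1 : ∀ i j : Fin (M-1), g β ((i:ℤ) - (j:ℤ)) * (x i * x j)
          = (g β ((i:ℤ)-(j:ℤ)) * x i^2 + g β ((i:ℤ)-(j:ℤ)) * x j^2
            - g β ((i:ℤ)-(j:ℤ)) * (x i - x j)^2) / 2 := by
        intro i j; ring
      have hS1 : 0 ≤ ∑ i : Fin (M-1), ∑ j : Fin (M-1), g β ((i:ℤ) - (j:ℤ)) * x i ^ 2 := by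
        apply Finset.sum_nonneg; intro i _
        rw [← Finset.sum_mul]
        exact mul_nonneg (rowsum i) (sq_nonneg _)
      have hS2 : 0 ≤ ∑ i : Fin (M-1), ∑ j : Fin (M-1), g β ((i:ℤ) - (j:ℤ)) * x j ^ 2 := by
        rw [Finset.sum_comm]
        apply Finset.sum_nonneg; intro j _
        rw [← Finset.sum_mul]
        apply mul_nonneg _ (sq_nonneg _)
        calc (0:ℝ) ≤ ∑ i : Fin (M-1), g β ((j:ℤ) - (i:ℤ)) := rowsum j
        _ = ∑ i : Fin (M-1), g β ((i:ℤ) - (j:ℤ)) := by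
            apply Finset.sum_congr rfl; intro i _; rw [hgsymm i j]
      have hS3 : ∑ i : Fin (M-1), ∑ j : Fin (M-1), g β ((i:ℤ) - (j:ℤ)) * (x i - x j) ^ 2 ≤ 0 := by
        apply Finset.sum_nonpos; intro i _
        apply Finset.sum_nonpos; intro j _
        by_cases hij : i = j
        · subst hij; simp
        · apply mul_nonpos_of_nonpos_of_nonneg _ (sq_nonneg _)
          apply g_nonpos hβ1 hβ2
          have hvne : ((i:ℕ):ℤ) ≠ ((j:ℕ):ℤ) := by
            intro hv
            exact hij (Fin.ext (by exact_mod_cast hv))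
          omega
      calc (0:ℝ) ≤ ((∑ i : Fin (M-1), ∑ j : Fin (M-1), g β ((i:ℤ) - (j:ℤ)) * x i ^ 2)
            + (∑ i : Fin (M-1), ∑ j : Fin (M-1), g β ((i:ℤ) - (j:ℤ)) * x j ^ 2)
            - (∑ i : Fin (M-1), ∑ j : Fin (M-1), g β ((i:ℤ) - (j:ℤ)) * (x i - x j) ^ 2)) / 2 := by
            linarith
      _ = ∑ i : Fin (M-1), ∑ j : Fin (M-1), g β ((i:ℤ) - (j:ℤ)) * (x i * x j) := by
          rw [← Finset.sum_add_distrib, ← Finset.sum_sub_distrib, Finset.sum_div]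
          refine Finset.sum_congr rfl fun i _ => ?_
          rw [← Finset.sum_add_distrib, ← Finset.sum_sub_distrib, Finset.sum_div]
          refine Finset.sum_congr rfl fun j _ => ?_
          rw [e1 i j]
    -- positivity of the diagonal part
    obtain ⟨i0, hi0⟩ := Function.ne_iff.mp hx
    have hsum : 0 < ∑ i, x i ^ 2 := by
      apply Finset.sum_pos' (fun i _ => sq_nonneg _)
      exact ⟨i0, Finset.mem_univ _, pow_two_pos_of_ne_zero (by simpa using hi0)⟩
    have : star x = x := by
      funext i; exact star_trivial _
    rw [this, expand]
    have h1 : 0 < c * ∑ i, x i ^ 2 := mul_pos hc hsum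
    nlinarith [mul_nonneg hb.le hQ]
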